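/- Let I be a Borel-fixed monomial ideal of K[x_0,...,x_n] generated in degrees ≤ m. Suppose x^A is a degree-m monomial not in I that is Borel-maximal among degree-m monomials not in I (i.e., every monomial strictly above x^A in the Borel order on degree-m monomials lies in I). Then for any index i, x_i·x^A ∈ I if and only if i < max(A), where max(A) is the largest index of a variable dividing x^A. -/

import Mathlib

/-!
If `i < max(A)`, the monomial `x_i x^A / x_{max(A)}` lies strictly above `x^A` in the Borel order,
hence in `I`, and `x_i x^A` is a multiple of it. If `i ≥ max(A)` and `x_i x^A ∈ I`, take a
generator `x^D ∣ x_i x^A` of degree `≤ m`. It does not divide `x^A`, so it contains one more `x_i`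
than `x^A`, and by degree it lacks some `x_j` of `x^A`, where `j < i`. The Borel move
`x_j x^D / x_i` then divides `x^A`, contradicting `x^A ∉ I`.
-/

open MvPolynomial

def IsMonomialIdeal {n : ℕ} {K : Type*} [CommRing K]
    (I : Ideal (MvPolynomial (Fin (n + 1)) K)) : Prop :=
  ∀ p ∈ I, ∀ A ∈ p.support, (monomial A (1 : K)) ∈ I

def BorelCombinatorial {n : ℕ} {K : Type*} [CommRing K]
    (I : Ideal (MvPolynomial (Fin (n + 1)) K)) : Prop :=
  ∀ A : Fin (n + 1) →₀ ℕ, monomial A (1 : K) ∈ I →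
    ∀ j : Fin (n + 1), A j ≠ 0 → ∀ i : Fin (n + 1), i < j →
      monomial (A + Finsupp.single i 1 - Finsupp.single j 1) (1 : K) ∈ I

def BorelStep {n : ℕ} (B A : Fin (n + 1) →₀ ℕ) : Prop :=
  ∃ i : Fin n, B i.succ ≠ 0 ∧
    A = B + Finsupp.single i.castSucc 1 - Finsupp.single i.succ 1

def BorelLE {n : ℕ} (B A : Fin (n + 1) →₀ ℕ) : Prop :=
  Relation.ReflTransGen BorelStep B A

def degSum {n : ℕ} (A : Fin (n + 1) →₀ ℕ) : ℕ := ∑ i, A i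

def GeneratedInDegLE {n : ℕ} {K : Type*} [CommRing K]
    (I : Ideal (MvPolynomial (Fin (n + 1)) K)) (m : ℕ) : Prop :=
  ∀ C : Fin (n + 1) →₀ ℕ, monomial C (1 : K) ∈ I → m < degSum C →
    ∃ D : Fin (n + 1) →₀ ℕ, monomial D (1 : K) ∈ I ∧ degSum D ≤ m ∧ D ≤ C

theorem monomial_one_mem_of_le {σ R : Type*} [CommSemiring R] {I : Ideal (MvPolynomial σ R)}
    {D C : σ →₀ ℕ} (hD : monomial D (1 : R) ∈ I) (hDC : D ≤ C) : monomial C (1 : R) ∈ I := by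
  have h := I.mul_mem_left (monomial (C - D) 1) hD
  rwa [monomial_mul, one_mul, tsub_add_cancel_of_le hDC] at h

section Borel

variable {n : ℕ}

theorem borelLE_add_single_sub_single {A : Fin (n + 1) →₀ ℕ} {i k : Fin (n + 1)}
    (hik : i < k) (hk : A k ≠ 0) :
    BorelLE A (A + Finsupp.single i 1 - Finsupp.single k 1) := by
  obtain ⟨d, hd⟩ : ∃ d, (k : ℕ) = i + d + 1 := ⟨k - i - 1, by omega⟩
  induction d generalizing i with
  | zero =>
    have hk' : (⟨i, by omega⟩ : Fin n).succ = k := Fin.ext (by simp [hd])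
    exact .single ⟨⟨i, by omega⟩, hk' ▸ hk, by rw [hk']; rfl⟩
  | succ d ih =>
    set i' : Fin (n + 1) := ⟨i + 1, by omega⟩
    have hi'k : i' ≠ k := fun h => by simp [i', ← h] at hd
    refine (ih (i := i') (Fin.lt_def.2 (by simp [i']; omega)) (by simp [i']; omega)).tail
      ⟨⟨i, by omega⟩, by simp [i', hi'k], ?_⟩
    ext a
    simp only [Finsupp.tsub_apply, Finsupp.add_apply, Finsupp.single_apply, Fin.ext_iff,
      Fin.val_castSucc, Fin.val_succ, i']
    have := Nat.pos_of_ne_zero hk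
    split_ifs <;> omega

theorem exists_add_single_sub_single_le {A D : Fin (n + 1) →₀ ℕ} {i : Fin (n + 1)}
    (hle : D ≤ A + Finsupp.single i 1) (hnot : ¬ D ≤ A) (hdeg : degSum D ≤ degSum A) :
    ∃ j, A j ≠ 0 ∧ j ≠ i ∧ D i ≠ 0 ∧ D + Finsupp.single j 1 - Finsupp.single i 1 ≤ A := by
  have hle_of_ne : ∀ a, a ≠ i → D a ≤ A a := fun a ha => by
    simpa [Finsupp.single_apply, Ne.symm ha] using hle a
  have hDi : D i = A i + 1 := by
    obtain ⟨a, ha⟩ : ∃ a, A a < D a := by simpa [Finsupp.le_def] using hnot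
    obtain rfl : a = i := by_contra fun h => (hle_of_ne a h).not_gt ha
    have := hle a
    simp only [Finsupp.add_apply, Finsupp.single_eq_same] at this
    omega
  obtain ⟨j, hj⟩ : ∃ j, D j < A j := by
    by_contra! h
    have : degSum A < degSum D :=
      Finset.sum_lt_sum (fun a _ => h a) ⟨i, Finset.mem_univ _, by omega⟩
    omega
  have hji : j ≠ i := by rintro rfl; omega
  refine ⟨j, by omega, hji, by omega, fun a => ?_⟩
  have := hle_of_ne a
  simp only [Finsupp.tsub_apply, Finsupp.add_apply, Finsupp.single_apply]
  split_ifs <;> subst_vars <;> omega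

variable {K : Type*} [CommRing K] {I : Ideal (MvPolynomial (Fin (n + 1)) K)}

theorem monomial_add_single_notMem {m : ℕ} (hB : BorelCombinatorial I)
    (hgen : GeneratedInDegLE I m) {A : Fin (n + 1) →₀ ℕ} (hdeg : degSum A = m)
    (hA : monomial A (1 : K) ∉ I) {i : Fin (n + 1)} (hi : ∀ j, A j ≠ 0 → j ≤ i) :
    monomial (A + Finsupp.single i 1) (1 : K) ∉ I := by
  intro hmem
  have hdeg' : degSum (A + Finsupp.single i 1) = m + 1 := by
    simp [degSum, Finset.sum_add_distrib, ← hdeg]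
  obtain ⟨D, hD, hDdeg, hDle⟩ := hgen _ hmem (by omega)
  have hnot : ¬ D ≤ A := fun h => hA (monomial_one_mem_of_le hD h)
  obtain ⟨j, hAj, hji, hDi, hmove⟩ := exists_add_single_sub_single_le hDle hnot (by omega)
  exact hA (monomial_one_mem_of_le
    (hB D hD i hDi j (lt_of_le_of_ne (hi j hAj) hji)) hmove)

theorem monomial_add_single_mem_of_lt {A : Fin (n + 1) →₀ ℕ}
    (hmax : ∀ C : Fin (n + 1) →₀ ℕ, BorelLE A C → C ≠ A → monomial C (1 : K) ∈ I)
    {i k : Fin (n + 1)} (hik : i < k) (hk : A k ≠ 0) :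
    monomial (A + Finsupp.single i 1) (1 : K) ∈ I := by
  have hne : A + Finsupp.single i 1 - Finsupp.single k 1 ≠ A := fun h => by
    have := DFunLike.congr_fun h k
    simp [hik.ne] at this
    omega
  exact monomial_one_mem_of_le
    (hmax _ (borelLE_add_single_sub_single hik hk) hne) tsub_le_self

end Borel

theorem stmt10_general {n m : ℕ} {K : Type*} [Field K]
    (I : Ideal (MvPolynomial (Fin (n + 1)) K))
    (hB : BorelCombinatorial I) (hgen : GeneratedInDegLE I m)
    (A : Fin (n + 1) →₀ ℕ) (hdeg : degSum A = m) (hA : monomial A (1 : K) ∉ I)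
    (hmax : ∀ C : Fin (n + 1) →₀ ℕ, BorelLE A C → C ≠ A → monomial C (1 : K) ∈ I)
    (k : Fin (n + 1)) (hk : A k ≠ 0) (hkmax : ∀ j : Fin (n + 1), A j ≠ 0 → j ≤ k)
    (i : Fin (n + 1)) :
    monomial (A + Finsupp.single i 1) (1 : K) ∈ I ↔ i < k := by
  refine ⟨fun hmem => ?_, fun hik => monomial_add_single_mem_of_lt hmax hik hk⟩
  by_contra! hki
  exact monomial_add_single_notMem hB hgen hdeg hA
    (fun j hj => (hkmax j hj).trans hki) hmem

/-- If `x^A` is a Borel-maximal degree-`m` standard monomial of a Borel-fixed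
ideal `I` generated in degrees `≤ m`, then `x_i x^A ∈ I ↔ i < max(A)`. -/
theorem stmt10 {n m : ℕ} {K : Type*} [Field K]
    (I : Ideal (MvPolynomial (Fin (n + 1)) K)) (hI : IsMonomialIdeal I)
    (hB : BorelCombinatorial I) (hgen : GeneratedInDegLE I m)
    (A : Fin (n + 1) →₀ ℕ) (hdeg : degSum A = m) (hA : monomial A (1 : K) ∉ I)
    (hmax : ∀ C : Fin (n + 1) →₀ ℕ, BorelLE A C → C ≠ A → monomial C (1 : K) ∈ I)
    (k : Fin (n + 1)) (hk : A k ≠ 0) (hkmax : ∀ j : Fin (n + 1), A j ≠ 0 → j ≤ k)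
    (i : Fin (n + 1)) :
    monomial (A + Finsupp.single i 1) (1 : K) ∈ I ↔ i < k :=
  stmt10_general I hB hgen A hdeg hA hmax k hk hkmax i
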